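/- There exists a quantum finite state transducer that computes the relation R₂ = {(w2w, w) : w∈{0,1}*} ⊆ {0,1,2}*×{0,1}* with probability 2/3. -/

import Mathlib

/-!  Quantum finite state transducers (qfst), following
Freivalds & Winter, "Quantum Finite State Transducers". -/

section QFSTdefs

variable {Q Γ₁ Γ₂ : Type*}

/-- A quantum finite state transducer: a finite state set `Q`, input alphabet
`Γ₁` (with implicit begin/end markers `‡`,`$`), output alphabet `Γ₂`, unitary
transition matrices for every letter and for the two markers, output
functions, an initial state, and disjoint sets of accepting and rejecting
states.  The end-marker unitary carries no amplitude from non-halting states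
to outside `acc ∪ rej`. -/
structure QFST (Q Γ₁ Γ₂ : Type*) [Fintype Q] [DecidableEq Q] where
  V : Γ₁ → Matrix Q Q ℂ
  Vbeg : Matrix Q Q ℂ
  Vend : Matrix Q Q ℂ
  out : Γ₁ → Q → List Γ₂
  outBeg : Q → List Γ₂
  outEnd : Q → List Γ₂
  init : Q
  acc : Finset Q
  rej : Finset Q
  acc_disj_rej : Disjoint acc rej
  unitary : ∀ a, V a ∈ Matrix.unitaryGroup Q ℂ
  unitaryBeg : Vbeg ∈ Matrix.unitaryGroup Q ℂ
  unitaryEnd : Vend ∈ Matrix.unitaryGroup Q ℂ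
  endHalts : ∀ q, q ∉ acc → q ∉ rej → ∀ p, p ∉ acc → p ∉ rej → Vend q p = 0

variable [DecidableEq Γ₂] [Fintype Q] [DecidableEq Q]

/-- One computation step, before measurement: starting from the superposition
`ψ` over (non-halting state, output tape content) pairs, every state `q`
writes the word `s.2 q` on the output tape and the unitary `s.1` is applied;
this is the resulting amplitude of the pair `(p, w)`. -/
noncomputable def qStepAmp (s : Matrix Q Q ℂ × (Q → List Γ₂)) (ψ : Q → List Γ₂ → ℂ)
    (p : Q) (w : List Γ₂) : ℂ :=
  ∑ q, (if s.2 q <:+ w then ψ q (w.take (w.length - (s.2 q).length)) else 0) * s.1 q p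

/-- Accumulated acceptance probabilities of a qfst computation: after each
step the orthogonal measurement (non-halting ⊕ accepting ⊕ rejecting) is
performed; amplitude on accepting states is collected (per output word `w`)
into the accumulator `P`, and only the non-halting part of the superposition
survives to the next step. -/
noncomputable def qAccAux (acc non : Finset Q) :
    List (Matrix Q Q ℂ × (Q → List Γ₂)) → (Q → List Γ₂ → ℂ) → (List Γ₂ → ℝ) →
      List Γ₂ → ℝ
  | [], _, P => P
  | s :: rest, ψ, P =>
      qAccAux acc non rest (fun p w => if p ∈ non then qStepAmp s ψ p w else 0)
        (fun w => P w + ∑ p ∈ acc, ‖qStepAmp s ψ p w‖ ^ 2)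

/-- The list of computation steps on input `‡ v $`. -/
def QFST.steps (T : QFST Q Γ₁ Γ₂) (v : List Γ₁) :
    List (Matrix Q Q ℂ × (Q → List Γ₂)) :=
  (T.Vbeg, T.outBeg) :: (v.map fun a => (T.V a, T.out a)) ++ [(T.Vend, T.outEnd)]

/-- `T.prob v w` : the accumulated probability that on input `‡ v $` the
computation accepts, having written exactly `w` on the output tape. -/
noncomputable def QFST.prob (T : QFST Q Γ₁ Γ₂) (v : List Γ₁) (w : List Γ₂) : ℝ :=
  qAccAux T.acc (Finset.univ \ (T.acc ∪ T.rej)) (T.steps v)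
    (fun q u => if q = T.init ∧ u = ([] : List Γ₂) then 1 else 0) (fun _ => 0) w

/-- `T` computes the relation `R` with probability `α`. -/
def QFST.Computes (T : QFST Q Γ₁ Γ₂) (R : Set (List Γ₁ × List Γ₂)) (α : ℝ) : Prop :=
  ∀ v w, ((v, w) ∈ R → α ≤ T.prob v w) ∧ ((v, w) ∉ R → T.prob v w ≤ 1 - α)

/-- `T` computes the relation `R` with isolated cutpoint `α`. -/
def QFST.ComputesCutpoint (T : QFST Q Γ₁ Γ₂) (R : Set (List Γ₁ × List Γ₂)) (α : ℝ) : Prop :=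
  ∃ ε > 0, ∀ v w, ((v, w) ∈ R → α + ε ≤ T.prob v w) ∧ ((v, w) ∉ R → T.prob v w ≤ α - ε)

end QFSTdefs

/-- The relation `R₂ = {(w2w, w) : w ∈ {0,1}*} ⊆ {0,1,2}* × {0,1}*`
(the letters `0`, `1` of the output word being embedded into the input
alphabet `Fin 3`). -/
def R₂ : Set (List (Fin 3) × List (Fin 2)) :=
  {p | ∃ w : List (Fin 2),
    p.1 = w.map (Fin.castLE (by norm_num)) ++ [2] ++ w.map (Fin.castLE (by norm_num)) ∧
    p.2 = w}


namespace QR2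

noncomputable def c : ℂ := ((Real.sqrt 2)⁻¹ : ℝ)

@[simp] lemma conj_c : (starRingEnd ℂ) c = c := Complex.conj_ofReal _

lemma c_mul_c : c * c = (1/2 : ℂ) := by
  unfold c
  rw [← Complex.ofReal_mul, ← mul_inv, Real.mul_self_sqrt (by norm_num)]
  norm_num

noncomputable def MB : Matrix (Fin 8) (Fin 8) ℂ := fun q p =>
  if q = 0 then (if p = 0 then c else if p = 2 then c else 0)
  else if q = 2 then (if p = 0 then c else if p = 2 then -c else 0)
  else if p = q then 1 else 0

def M2 : Matrix (Fin 8) (Fin 8) ℂ := fun q p =>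
  if q = 0 then (if p = 1 then 1 else 0)
  else if q = 1 then (if p = 6 then 1 else 0)
  else if q = 6 then (if p = 0 then 1 else 0)
  else if q = 2 then (if p = 3 then 1 else 0)
  else if q = 3 then (if p = 7 then 1 else 0)
  else if q = 7 then (if p = 2 then 1 else 0)
  else if p = q then 1 else 0

noncomputable def ME : Matrix (Fin 8) (Fin 8) ℂ := fun q p =>
  if q = 0 then (if p = 6 then 1 else 0)
  else if q = 1 then (if p = 4 then c else if p = 5 then c else 0)
  else if q = 2 then (if p = 7 then 1 else 0)
  else if q = 3 then (if p = 4 then c else if p = 5 then -c else 0)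
  else if q = 4 then (if p = 0 then 1 else 0)
  else if q = 5 then (if p = 1 then 1 else 0)
  else if q = 6 then (if p = 2 then 1 else 0)
  else (if p = 3 then 1 else 0)

lemma MB_unitary : MB ∈ Matrix.unitaryGroup (Fin 8) ℂ := by
  rw [Matrix.mem_unitaryGroup_iff]
  ext i j
  fin_cases i <;> fin_cases j <;>
    simp [Matrix.mul_apply, Fin.sum_univ_eight, MB, Matrix.one_apply,
      Matrix.star_apply, Complex.star_def, c_mul_c] <;> ring_nf <;>
    simp [c_mul_c] <;> norm_num

lemma M2_unitary : M2 ∈ Matrix.unitaryGroup (Fin 8) ℂ := by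
  rw [Matrix.mem_unitaryGroup_iff]
  ext i j
  fin_cases i <;> fin_cases j <;>
    simp [Matrix.mul_apply, Fin.sum_univ_eight, M2, Matrix.one_apply,
      Matrix.star_apply, Complex.star_def]

lemma ME_unitary : ME ∈ Matrix.unitaryGroup (Fin 8) ℂ := by
  rw [Matrix.mem_unitaryGroup_iff]
  ext i j
  fin_cases i <;> fin_cases j <;>
    simp [Matrix.mul_apply, Fin.sum_univ_eight, ME, Matrix.one_apply,
      Matrix.star_apply, Complex.star_def, c_mul_c] <;> ring_nf <;>
    simp [c_mul_c] <;> norm_num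

def g : Fin 3 → List (Fin 2) := fun a => if a = 0 then [0] else if a = 1 then [1] else []

noncomputable def T : QFST (Fin 8) (Fin 3) (Fin 2) where
  V a := if a = 2 then M2 else 1
  Vbeg := MB
  Vend := ME
  out a q := if q = 0 ∨ q = 3 then g a else []
  outBeg _ := []
  outEnd _ := []
  init := 0
  acc := {4}
  rej := {5, 6, 7}
  acc_disj_rej := by decide
  unitary a := by
    by_cases h : a = 2
    · simp [h, M2_unitary]
    · simp only [h, if_false]
      exact one_mem _
  unitaryBeg := MB_unitary
  unitaryEnd := ME_unitary
  endHalts := by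
    intro q hq1 hq2 p hp1 hp2
    fin_cases q <;> fin_cases p <;> simp_all [ME]

/-! ### Output word infrastructure -/

def F : List (Fin 3) → List (Fin 2)
  | [] => []
  | a :: t => g a ++ F t

def e : Fin 2 → Fin 3 := Fin.castLE (by norm_num)

lemma e_ne_two (b : Fin 2) : e b ≠ 2 := by fin_cases b <;> decide

lemma two_not_mem_map_e (w : List (Fin 2)) : (2 : Fin 3) ∉ w.map e := by
  simp only [List.mem_map, not_exists]
  rintro b ⟨_, hb⟩
  exact e_ne_two b hb

lemma F_map_e (w : List (Fin 2)) : F (w.map e) = w := by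
  induction w with
  | nil => rfl
  | cons b t ih =>
    have : g (e b) = [b] := by fin_cases b <;> decide
    simp [F, this, ih]

lemma map_e_F {u : List (Fin 3)} (hu : (2 : Fin 3) ∉ u) : (F u).map e = u := by
  induction u with
  | nil => rfl
  | cons a t ih =>
    have ha : a ≠ 2 := fun h => hu (h ▸ List.mem_cons_self)
    have ht : (2 : Fin 3) ∉ t := fun h => hu (List.mem_cons_of_mem _ h)
    have : ∃ b : Fin 2, g a = [b] ∧ e b = a := by
      fin_cases a
      · exact ⟨0, by decide, by decide⟩
      · exact ⟨1, by decide, by decide⟩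
      · exact absurd rfl ha
    obtain ⟨b, hg, hb⟩ := this
    simp [F, hg, ih ht, hb]

lemma F_inj {u x : List (Fin 3)} (hu : (2 : Fin 3) ∉ u) (hx : (2 : Fin 3) ∉ x)
    (h : F u = F x) : u = x := by
  rw [← map_e_F hu, ← map_e_F hx, h]

/-! ### List splitting lemmas -/

lemma first_split {α : Type*} [DecidableEq α] {a : α} :
    ∀ {l : List α}, a ∈ l → ∃ s t, l = s ++ a :: t ∧ a ∉ s := by
  intro l hl
  induction l with
  | nil => cases hl
  | cons b t ih =>
    by_cases hb : b = a
    · exact ⟨[], t, by rw [hb]; rfl, List.not_mem_nil⟩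
    · have : a ∈ t := by
        rcases List.mem_cons.mp hl with h | h
        · exact absurd h.symm hb
        · exact h
      obtain ⟨s, t', rfl, hs⟩ := ih this
      exact ⟨b :: s, t', rfl, by
        intro h
        rcases List.mem_cons.mp h with h | h
        · exact hb h.symm
        · exact hs h⟩

lemma split_unique {α : Type*} {a : α} :
    ∀ {s s' t t' : List α}, a ∉ s → a ∉ s' → s ++ a :: t = s' ++ a :: t' →
      s = s' ∧ t = t' := by
  intro s
  induction s with
  | nil =>
    intro s' t t' _ hs' h
    cases s' with
    | nil => simpa using h
    | cons b s'' =>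
      simp only [List.nil_append, List.cons_append, List.cons.injEq] at h
      exact absurd (h.1 ▸ List.mem_cons_self) hs'
  | cons b s ih =>
    intro s' t t' hs hs' h
    cases s' with
    | nil =>
      simp only [List.nil_append, List.cons_append, List.cons.injEq] at h
      exact absurd (h.1.symm ▸ List.mem_cons_self) hs
    | cons b' s'' =>
      simp only [List.cons_append, List.cons.injEq] at h
      obtain ⟨rfl, h2⟩ := h
      have := ih (fun hh => hs (List.mem_cons_of_mem _ hh))
        (fun hh => hs' (List.mem_cons_of_mem _ hh)) h2
      exact ⟨by rw [this.1], this.2⟩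

lemma suffix_take_iff {α : Type*} (s p w : List α) :
    (s <:+ w ∧ w.take (w.length - s.length) = p) ↔ w = p ++ s := by
  constructor
  · rintro ⟨⟨t, rfl⟩, h2⟩
    rw [List.length_append, Nat.add_sub_cancel, List.take_left] at h2
    rw [h2]
  · rintro rfl
    refine ⟨⟨p, rfl⟩, ?_⟩
    rw [List.length_append, Nat.add_sub_cancel, List.take_left]

lemma ite_suffix_take {α : Type*} [DecidableEq α] (s p w : List α) (v : ℂ) :
    (if s <:+ w then (if w.take (w.length - s.length) = p then v else 0) else 0)
      = (if w = p ++ s then v else 0) := by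
  by_cases h : w = p ++ s
  · have := (suffix_take_iff s p w).mpr h
    simp [h, this.1, this.2]
  · simp only [h, if_false]
    split_ifs with h1 h2
    · exact absurd ((suffix_take_iff s p w).mp ⟨h1, h2⟩) h
    · rfl
    · rfl

/-! ### qAccAux infrastructure -/

noncomputable def ACC : Finset (Fin 8) := {4}
noncomputable def NON : Finset (Fin 8) :=
  Finset.univ \ (({4} : Finset (Fin 8)) ∪ {5, 6, 7})

lemma mem_NON (p : Fin 8) : p ∈ NON ↔ (p = 0 ∨ p = 1 ∨ p = 2 ∨ p = 3) := by
  fin_cases p <;> decide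

lemma qStepAmp_congr {ψ ψ' : Fin 8 → List (Fin 2) → ℂ}
    (h : ∀ q w, ψ q w = ψ' q w) (s : Matrix (Fin 8) (Fin 8) ℂ × (Fin 8 → List (Fin 2)))
    (p : Fin 8) (w : List (Fin 2)) : qStepAmp s ψ p w = qStepAmp s ψ' p w := by
  unfold qStepAmp
  refine Finset.sum_congr rfl fun q _ => ?_
  rw [h]

lemma qAccAux_congr :
    ∀ (L : List (Matrix (Fin 8) (Fin 8) ℂ × (Fin 8 → List (Fin 2))))
      {ψ ψ' : Fin 8 → List (Fin 2) → ℂ} {P P' : List (Fin 2) → ℝ},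
      (∀ q w, ψ q w = ψ' q w) → (∀ w, P w = P' w) →
      ∀ w, qAccAux ACC NON L ψ P w = qAccAux ACC NON L ψ' P' w := by
  intro L
  induction L with
  | nil => intro ψ ψ' P P' hψ hP w; simpa [qAccAux] using hP w
  | cons s rest ih =>
    intro ψ ψ' P P' hψ hP w
    simp only [qAccAux]
    exact ih (fun q w => by rw [qStepAmp_congr hψ])
      (fun w => by
        rw [hP]
        exact congrArg _ (Finset.sum_congr rfl fun p _ => by rw [qStepAmp_congr hψ])) w

lemma qAccAux_zero :
    ∀ (L : List (Matrix (Fin 8) (Fin 8) ℂ × (Fin 8 → List (Fin 2))))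
      {ψ : Fin 8 → List (Fin 2) → ℂ} {P : List (Fin 2) → ℝ},
      (∀ q w, ψ q w = 0) → ∀ w, qAccAux ACC NON L ψ P w = P w := by
  intro L
  induction L with
  | nil => intro ψ P hψ w; simp [qAccAux]
  | cons s rest ih =>
    intro ψ P hψ w
    have hz : ∀ p u, qStepAmp s ψ p u = 0 := by
      intro p u
      unfold qStepAmp
      refine Finset.sum_eq_zero fun q _ => ?_
      rw [hψ]
      simp
    simp only [qAccAux]
    rw [ih (fun q w => by simp [hz])]
    simp [hz, ACC]

/-! ### Canonical superpositions -/

noncomputable def S0 (p₁ : List (Fin 2)) : Fin 8 → List (Fin 2) → ℂ := fun q w =>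
  if q = 0 ∧ w = p₁ then c else if q = 2 ∧ w = [] then c else 0

noncomputable def S1 (p₁ p₂ : List (Fin 2)) : Fin 8 → List (Fin 2) → ℂ := fun q w =>
  if q = 1 ∧ w = p₁ then c else if q = 3 ∧ w = p₂ then c else 0

/-! ### Single step computations -/

lemma stepBeg (p : Fin 8) (w : List (Fin 2)) :
    qStepAmp ((T.Vbeg, T.outBeg) : Matrix (Fin 8) (Fin 8) ℂ × (Fin 8 → List (Fin 2)))
      (fun q u => if q = T.init ∧ u = ([] : List (Fin 2)) then 1 else 0) p w
      = (if w = [] then MB 0 p else 0) := by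
  have h1 : T.outBeg = fun _ => ([] : List (Fin 2)) := rfl
  have h2 : T.init = 0 := rfl
  have h3 : T.Vbeg = MB := rfl
  unfold qStepAmp
  simp only [Fin.sum_univ_eight, h1, h2, h3, List.nil_suffix, if_true,
    List.length_nil, Nat.sub_zero, List.take_length, Fin.isValue]
  by_cases hw : w = [] <;> simp [hw]

lemma stepA (a : Fin 3) (ha : a ≠ 2) (p₁ : List (Fin 2)) (p : Fin 8) (w : List (Fin 2)) :
    qStepAmp ((T.V a, T.out a) : Matrix (Fin 8) (Fin 8) ℂ × (Fin 8 → List (Fin 2)))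
      (S0 p₁) p w = S0 (p₁ ++ g a) p w := by
  have hV : T.V a = 1 := by show (if a = 2 then M2 else 1) = 1; simp [ha]
  have hout : ∀ q, T.out a q = if q = 0 ∨ q = 3 then g a else [] := fun _ => rfl
  unfold qStepAmp
  simp only [hV]
  rw [Finset.sum_eq_single p]
  · simp only [Matrix.one_apply_eq, mul_one, hout]
    fin_cases p <;>
      simp (config := { decide := true }) only [S0, Fin.isValue, Fin.reduceEq, false_and, if_false, true_and,
        eq_self_iff_true, true_or, false_or, or_self, or_false, if_true,
        List.nil_suffix, List.length_nil, Nat.sub_zero, List.take_length,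
        ite_suffix_take, ite_self]
  · intro q _ hq
    rw [Matrix.one_apply_ne hq, mul_zero]
  · intro h
    exact absurd (Finset.mem_univ p) h

lemma stepB (a : Fin 3) (ha : a ≠ 2) (p₁ p₂ : List (Fin 2)) (p : Fin 8) (w : List (Fin 2)) :
    qStepAmp ((T.V a, T.out a) : Matrix (Fin 8) (Fin 8) ℂ × (Fin 8 → List (Fin 2)))
      (S1 p₁ p₂) p w = S1 p₁ (p₂ ++ g a) p w := by
  have hV : T.V a = 1 := by show (if a = 2 then M2 else 1) = 1; simp [ha]
  have hout : ∀ q, T.out a q = if q = 0 ∨ q = 3 then g a else [] := fun _ => rfl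
  unfold qStepAmp
  simp only [hV]
  rw [Finset.sum_eq_single p]
  · simp only [Matrix.one_apply_eq, mul_one, hout]
    fin_cases p <;>
      simp (config := { decide := true }) only [S1, Fin.isValue, Fin.reduceEq, false_and, if_false, true_and,
        eq_self_iff_true, true_or, false_or, or_self, or_false, if_true,
        List.nil_suffix, List.length_nil, Nat.sub_zero, List.take_length,
        ite_suffix_take, ite_self]
  · intro q _ hq
    rw [Matrix.one_apply_ne hq, mul_zero]
  · intro h
    exact absurd (Finset.mem_univ p) h

lemma out2 : ∀ q, T.out 2 q = [] := by
  intro q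
  show (if q = 0 ∨ q = 3 then g 2 else []) = []
  split_ifs <;> rfl

lemma V2 : T.V 2 = M2 := by show (if (2:Fin 3) = 2 then M2 else 1) = M2; simp

lemma step2A (p₁ : List (Fin 2)) (p : Fin 8) (w : List (Fin 2)) :
    qStepAmp ((T.V 2, T.out 2) : Matrix (Fin 8) (Fin 8) ℂ × (Fin 8 → List (Fin 2)))
      (S0 p₁) p w = S1 p₁ [] p w := by
  unfold qStepAmp
  simp only [Fin.sum_univ_eight, out2, V2, List.nil_suffix, if_true,
    List.length_nil, Nat.sub_zero, List.take_length]
  fin_cases p <;>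
    simp (config := { decide := true }) [S0, S1, M2]

lemma step2B (p₁ p₂ : List (Fin 2)) (p : Fin 8) (w : List (Fin 2)) :
    qStepAmp ((T.V 2, T.out 2) : Matrix (Fin 8) (Fin 8) ℂ × (Fin 8 → List (Fin 2)))
      (S1 p₁ p₂) p w
      = (if p = 6 ∧ w = p₁ then c else if p = 7 ∧ w = p₂ then c else 0) := by
  unfold qStepAmp
  simp only [Fin.sum_univ_eight, out2, V2, List.nil_suffix, if_true,
    List.length_nil, Nat.sub_zero, List.take_length]
  fin_cases p <;>
    simp (config := { decide := true }) [S1, M2]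

lemma outEnd' : T.outEnd = fun _ => ([] : List (Fin 2)) := rfl
lemma VEnd' : T.Vend = ME := rfl

lemma endAmp1 (p₁ p₂ : List (Fin 2)) (w : List (Fin 2)) :
    qStepAmp ((T.Vend, T.outEnd) : Matrix (Fin 8) (Fin 8) ℂ × (Fin 8 → List (Fin 2)))
      (S1 p₁ p₂) 4 w
      = (if w = p₁ then c else 0) * c + (if w = p₂ then c else 0) * c := by
  unfold qStepAmp
  simp only [Fin.sum_univ_eight, outEnd', VEnd', List.nil_suffix, if_true,
    List.length_nil, Nat.sub_zero, List.take_length]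
  simp (config := { decide := true }) [S1, ME]

lemma endAmp0 (p₁ : List (Fin 2)) (w : List (Fin 2)) :
    qStepAmp ((T.Vend, T.outEnd) : Matrix (Fin 8) (Fin 8) ℂ × (Fin 8 → List (Fin 2)))
      (S0 p₁) 4 w = 0 := by
  unfold qStepAmp
  simp only [Fin.sum_univ_eight, outEnd', VEnd', List.nil_suffix, if_true,
    List.length_nil, Nat.sub_zero, List.take_length]
  simp (config := { decide := true }) [S0, ME]

lemma projS0 (x : List (Fin 2)) (p : Fin 8) (u : List (Fin 2)) :
    (if p ∈ NON then S0 x p u else 0) = S0 x p u := by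
  fin_cases p <;> simp (config := { decide := true }) [S0, NON]

lemma projS1 (x y : List (Fin 2)) (p : Fin 8) (u : List (Fin 2)) :
    (if p ∈ NON then S1 x y p u else 0) = S1 x y p u := by
  fin_cases p <;> simp (config := { decide := true }) [S1, NON]

lemma S0_four (x : List (Fin 2)) (u : List (Fin 2)) : S0 x 4 u = 0 := by
  simp (config := { decide := true }) [S0]

lemma S1_four (x y : List (Fin 2)) (u : List (Fin 2)) : S1 x y 4 u = 0 := by
  simp (config := { decide := true }) [S1]

lemma hACC : ACC = ({4} : Finset (Fin 8)) := rfl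

/-! ### Running segments -/

lemma runA (u : List (Fin 3)) (hu : (2 : Fin 3) ∉ u) :
    ∀ (p₁ : List (Fin 2)) rest P (w : List (Fin 2)),
      qAccAux ACC NON ((u.map fun a => (T.V a, T.out a)) ++ rest) (S0 p₁) P w
        = qAccAux ACC NON rest (S0 (p₁ ++ F u)) P w := by
  induction u with
  | nil => intro p₁ rest P w; simp [F]
  | cons a t ih =>
    intro p₁ rest P w
    have ha : a ≠ 2 := fun h => hu (h ▸ List.mem_cons_self)
    have ht : (2 : Fin 3) ∉ t := fun h => hu (List.mem_cons_of_mem _ h)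
    rw [List.map_cons, List.cons_append]
    simp only [qAccAux]
    rw [qAccAux_congr _ (ψ' := S0 (p₁ ++ g a)) (P' := P)
      (fun p u' => by rw [qStepAmp_congr (fun q w => rfl), stepA a ha, projS0])
      (fun u' => by
        rw [hACC, Finset.sum_singleton, stepA a ha, S0_four]
        simp)]
    rw [ih ht (p₁ ++ g a) rest P w, F, List.append_assoc]

lemma runB (x : List (Fin 3)) (hx : (2 : Fin 3) ∉ x) :
    ∀ (p₁ p₂ : List (Fin 2)) rest P (w : List (Fin 2)),
      qAccAux ACC NON ((x.map fun a => (T.V a, T.out a)) ++ rest) (S1 p₁ p₂) P w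
        = qAccAux ACC NON rest (S1 p₁ (p₂ ++ F x)) P w := by
  induction x with
  | nil => intro p₁ p₂ rest P w; simp [F]
  | cons a t ih =>
    intro p₁ p₂ rest P w
    have ha : a ≠ 2 := fun h => hx (h ▸ List.mem_cons_self)
    have ht : (2 : Fin 3) ∉ t := fun h => hx (List.mem_cons_of_mem _ h)
    rw [List.map_cons, List.cons_append]
    simp only [qAccAux]
    rw [qAccAux_congr _ (ψ' := S1 p₁ (p₂ ++ g a)) (P' := P)
      (fun p u' => by rw [qStepAmp_congr (fun q w => rfl), stepB a ha, projS1])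
      (fun u' => by
        rw [hACC, Finset.sum_singleton, stepB a ha, S1_four]
        simp)]
    rw [ih ht p₁ (p₂ ++ g a) rest P w, F, List.append_assoc]

/-! ### Probability formulas -/

lemma begProj (p : Fin 8) (u : List (Fin 2)) :
    (if p ∈ NON then (if u = ([] : List (Fin 2)) then MB 0 p else 0) else 0)
      = S0 [] p u := by
  fin_cases p <;> by_cases hu : u = [] <;>
    simp (config := { decide := true }) [S0, NON, MB, hu]


lemma prob_expand (v : List (Fin 3)) (w : List (Fin 2)) :
    T.prob v w = qAccAux ACC NON
      ((v.map fun a => (T.V a, T.out a)) ++ [(T.Vend, T.outEnd)])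
      (S0 []) (fun _ => 0) w := by
  unfold QFST.prob QFST.steps
  have hN : Finset.univ \ (T.acc ∪ T.rej) = NON := rfl
  have hA : T.acc = ACC := rfl
  rw [hN, hA, List.cons_append]
  simp only [qAccAux]
  exact qAccAux_congr _
    (fun p u => by rw [stepBeg]; exact begProj p u)
    (fun u => by
      rw [hACC, Finset.sum_singleton, stepBeg]
      simp [MB]) w

lemma qAccAux_end (ψ : Fin 8 → List (Fin 2) → ℂ) (P : List (Fin 2) → ℝ)
    (w : List (Fin 2)) :
    qAccAux ACC NON [((T.Vend, T.outEnd) : Matrix (Fin 8) (Fin 8) ℂ × (Fin 8 → List (Fin 2)))] ψ P w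
      = P w + ‖qStepAmp ((T.Vend, T.outEnd) : Matrix (Fin 8) (Fin 8) ℂ × (Fin 8 → List (Fin 2))) ψ 4 w‖ ^ 2 := by
  simp only [qAccAux, hACC, Finset.sum_singleton]

lemma prob_no2 (v : List (Fin 3)) (hv : (2 : Fin 3) ∉ v) (w : List (Fin 2)) :
    T.prob v w = 0 := by
  rw [prob_expand, runA v hv [] _ _ w, qAccAux_end, endAmp0]
  simp

lemma prob_one2 (u x : List (Fin 3)) (hu : (2 : Fin 3) ∉ u) (hx : (2 : Fin 3) ∉ x)
    (w : List (Fin 2)) :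
    T.prob (u ++ 2 :: x) w
      = ‖(if w = F u then c else 0) * c + (if w = F x then c else 0) * c‖ ^ 2 := by
  rw [prob_expand, List.map_append, List.map_cons, List.append_assoc,
    runA u hu [] _ _ w, List.nil_append, List.cons_append]
  simp only [qAccAux]
  rw [qAccAux_congr _ (ψ' := S1 (F u) []) (P' := fun _ => 0)
    (fun p u' => by rw [qStepAmp_congr (fun q w => rfl), step2A, projS1])
    (fun u' => by
      rw [hACC, Finset.sum_singleton, step2A, S1_four]
      simp)]
  rw [runB x hx (F u) [] _ _ w, List.nil_append, qAccAux_end, endAmp1]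
  simp

lemma prob_two2 (u x y : List (Fin 3)) (hu : (2 : Fin 3) ∉ u) (hx : (2 : Fin 3) ∉ x)
    (w : List (Fin 2)) :
    T.prob (u ++ 2 :: (x ++ 2 :: y)) w = 0 := by
  rw [prob_expand, List.map_append, List.map_cons, List.append_assoc,
    runA u hu [] _ _ w, List.nil_append, List.cons_append]
  simp only [qAccAux]
  rw [qAccAux_congr _ (ψ' := S1 (F u) []) (P' := fun _ => 0)
    (fun p u' => by rw [qStepAmp_congr (fun q w => rfl), step2A, projS1])
    (fun u' => by
      rw [hACC, Finset.sum_singleton, step2A, S1_four]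
      simp)]
  rw [List.map_append, List.map_cons, List.append_assoc,
    runB x hx (F u) [] _ _ w, List.nil_append, List.cons_append]
  simp only [qAccAux]
  rw [qAccAux_zero _ (fun p u' => by
      rw [qStepAmp_congr (fun q w => rfl), step2B]
      fin_cases p <;> simp (config := { decide := true }) [NON])]
  rw [hACC, Finset.sum_singleton]
  rw [qStepAmp_congr (fun q w => rfl), step2B]
  simp (config := { decide := true })

/-! ### Relation to R₂ -/

lemma mem_R2 (u : List (Fin 3)) (hu : (2 : Fin 3) ∉ u) :
    ((u ++ 2 :: u, F u) ∈ R₂) := by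
  refine ⟨F u, ?_, rfl⟩
  show u ++ 2 :: u = (F u).map e ++ [2] ++ (F u).map e
  rw [map_e_F hu, List.append_assoc, List.singleton_append]

lemma norm_half_sq : ‖(1 / 2 : ℂ)‖ ^ 2 = (1 / 4 : ℝ) := by
  rw [norm_div, norm_one]
  norm_num

end QR2

theorem qfst_computes_R₂' :
    ∃ (n : ℕ) (T : QFST (Fin n) (Fin 3) (Fin 2)), T.Computes R₂ (2/3) := by
  refine ⟨8, QR2.T, fun v w => ⟨?_, ?_⟩⟩
  · rintro ⟨w', h1, h2⟩
    have h2' : w = w' := h2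
    subst h2'
    have h1' : v = (w.map QR2.e) ++ 2 :: (w.map QR2.e) := by
      have h1'' : v = (w.map QR2.e) ++ [2] ++ (w.map QR2.e) := h1
      rw [h1'', List.append_assoc, List.singleton_append]
    subst h1'
    rw [QR2.prob_one2 _ _ (QR2.two_not_mem_map_e w) (QR2.two_not_mem_map_e w) w,
      QR2.F_map_e]
    have hc : ((if w = w then QR2.c else 0) * QR2.c
        + (if w = w then QR2.c else 0) * QR2.c : ℂ) = 1 := by
      rw [if_pos rfl, QR2.c_mul_c]
      norm_num
    rw [hc]
    norm_num
  · intro hvw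
    by_cases h2 : (2 : Fin 3) ∈ v
    · obtain ⟨u, t, rfl, hu⟩ := QR2.first_split h2
      by_cases h2' : (2 : Fin 3) ∈ t
      · obtain ⟨x, y, rfl, hx⟩ := QR2.first_split h2'
        rw [QR2.prob_two2 u x y hu hx]
        norm_num
      · rw [QR2.prob_one2 u t hu h2']
        by_cases hut : QR2.F u = QR2.F t
        · have : u = t := QR2.F_inj hu h2' hut
          subst this
          have hw : w ≠ QR2.F u := by
            rintro rfl
            exact hvw (QR2.mem_R2 u hu)
          rw [if_neg hw]
          norm_num
        · rcases eq_or_ne w (QR2.F u) with rfl | hwu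
          · rw [if_pos rfl, if_neg hut, zero_mul, add_zero, QR2.c_mul_c,
              QR2.norm_half_sq]
            norm_num
          · rw [if_neg hwu]
            rcases eq_or_ne w (QR2.F t) with rfl | hwt
            · rw [if_pos rfl, zero_mul, zero_add, QR2.c_mul_c, QR2.norm_half_sq]
              norm_num
            · rw [if_neg hwt]
              norm_num
    · rw [QR2.prob_no2 v h2]
      norm_num


/-- There is a quantum finite state transducer computing `R₂`
with probability `2/3`. -/
theorem qfst_computes_R₂ :
    ∃ (n : ℕ) (T : QFST (Fin n) (Fin 3) (Fin 2)), T.Computes R₂ (2/3) :=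
  qfst_computes_R₂'
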